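/- For all imaginary octonions p, q with ⟨p,q⟩ = 0, one has [ad_{D_p}, ad_{D_q}] = [ad_{X_p}, ad_{X_q}] as ℝ-linear operators on V (the paper's relation [D_p, D_q] = 2 D_{p,q} = [X_p, X_q]). -/

import Mathlib

noncomputable section

abbrev H := Quaternion ℝ

/-- The octonions 𝕆, as the Cayley–Dickson double of the quaternions:
pairs (a,b) of quaternions. -/
def Oct : Type := H × H

namespace Oct

instance : AddCommGroup Oct := inferInstanceAs (AddCommGroup (H × H))
instance : Module ℝ Oct := inferInstanceAs (Module ℝ (H × H))

def mk' (a b : H) : Oct := (a, b)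
def fst : Oct → H := Prod.fst
def snd : Oct → H := Prod.snd

/-- Cayley–Dickson multiplication: (a,b)·(c,d) = (ac − conj(d)b, da + b·conj(c)). -/
instance : Mul Oct :=
  ⟨fun p q => mk' (p.fst * q.fst - star q.snd * p.snd) (q.snd * p.fst + p.snd * star q.fst)⟩

instance : One Oct := ⟨mk' 1 0⟩

/-- Octonionic conjugation: conj (a,b) = (conj a, −b). -/
def conj (p : Oct) : Oct := mk' (star p.fst) (-p.snd)

/-- The real part of an octonion, as a real scalar. -/
def re (p : Oct) : ℝ := (p.fst).re

/-- The bilinear form ⟨x,y⟩ = (x·conj(y) + y·conj(x))/2, a real scalar. -/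
def oinner (p q : Oct) : ℝ := re (p * conj q + q * conj p) / 2

/-- The norm N(x) = x·conj(x), a real scalar. -/
def N (p : Oct) : ℝ := re (p * conj p)

/-- An octonion is imaginary if conj x = −x. -/
def IsIm (p : Oct) : Prop := conj p = -p

/-- The embedding of the reals into the octonions. -/
def oR (r : ℝ) : Oct := mk' (algebraMap ℝ H r) 0

end Oct

open Oct

abbrev M2 := Matrix (Fin 2) (Fin 2) Oct

/-- The traceless Hermitian 2×2 matrix P(z,a) = !![z, a; conj a, −z]. -/
def Pm (z : ℝ) (a : Oct) : M2 := !![oR z, a; conj a, -oR z]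

/-- The off-diagonal anti-Hermitian generator X_q = !![0, q; −conj q, 0]. -/
def Xm (q : Oct) : M2 := !![0, q; -conj q, 0]

/-- The diagonal generator D_q = !![q, 0; 0, −q]. -/
def Dm (q : Oct) : M2 := !![q, 0; 0, -q]

/-- The adjoint action ad_A : P ↦ AP − PA (entrywise octonion multiplication). -/
def ad (A : M2) : M2 → M2 := fun P => A * P - P * A

/-- The bracket of operators, [S,T] = S∘T − T∘S. -/
def br (S T : M2 → M2) : M2 → M2 := fun P => S (T P) - T (S P)

/-! For imaginary `q`, `ad_{D_q}` sends `P(z, a)` to `P(0, qa + aq)`, and `qa + aq = 2 Re(a) q - 2⟨q, a⟩`,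
while `ad_{X_q}` sends `P(z, a)` to `P(2⟨q, a⟩, -2z q)`. Iterating, both brackets send `P(z, a)` to
`P(0, 4⟨p, a⟩ q - 4⟨q, a⟩ p)`: the terms in `p q + q p` and in `⟨p, q⟩` cancel by symmetry. -/

namespace Oct

@[ext]
theorem ext {x y : Oct} (h₁ : x.fst = y.fst) (h₂ : x.snd = y.snd) : x = y :=
  Prod.ext h₁ h₂

@[simp] theorem fst_zero : (0 : Oct).fst = 0 := rfl
@[simp] theorem snd_zero : (0 : Oct).snd = 0 := rfl
@[simp] theorem fst_add (x y : Oct) : (x + y).fst = x.fst + y.fst := rfl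
@[simp] theorem snd_add (x y : Oct) : (x + y).snd = x.snd + y.snd := rfl
@[simp] theorem fst_neg (x : Oct) : (-x).fst = -x.fst := rfl
@[simp] theorem snd_neg (x : Oct) : (-x).snd = -x.snd := rfl
@[simp] theorem fst_sub (x y : Oct) : (x - y).fst = x.fst - y.fst := rfl
@[simp] theorem snd_sub (x y : Oct) : (x - y).snd = x.snd - y.snd := rfl
@[simp] theorem fst_smul (r : ℝ) (x : Oct) : (r • x).fst = r • x.fst := rfl
@[simp] theorem snd_smul (r : ℝ) (x : Oct) : (r • x).snd = r • x.snd := rfl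
@[simp] theorem fst_mul (x y : Oct) : (x * y).fst = x.fst * y.fst - star y.snd * x.snd := rfl
@[simp] theorem snd_mul (x y : Oct) : (x * y).snd = y.snd * x.fst + x.snd * star y.fst := rfl
@[simp] theorem fst_conj (x : Oct) : (conj x).fst = star x.fst := rfl
@[simp] theorem snd_conj (x : Oct) : (conj x).snd = -x.snd := rfl
-- Not `simp`: it would expose the cast `ℝ → H`, which `simp` then pushes inside sums and quotients.
theorem fst_oR (r : ℝ) : (oR r).fst = r := rfl
@[simp] theorem re_fst_oR (r : ℝ) : (oR r).fst.re = r := rfl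
@[simp] theorem imI_fst_oR (r : ℝ) : (oR r).fst.imI = 0 := rfl
@[simp] theorem imJ_fst_oR (r : ℝ) : (oR r).fst.imJ = 0 := rfl
@[simp] theorem imK_fst_oR (r : ℝ) : (oR r).fst.imK = 0 := rfl
@[simp] theorem snd_oR (r : ℝ) : (oR r).snd = 0 := rfl

instance : NonUnitalNonAssocRing Oct where
  left_distrib x y z := by ext <;> simp <;> noncomm_ring
  right_distrib x y z := by ext <;> simp <;> noncomm_ring
  zero_mul x := by ext <;> simp
  mul_zero x := by ext <;> simp

instance : IsScalarTower ℝ Oct Oct where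
  smul_assoc r x y := by ext <;> simp [smul_sub, smul_add]

instance : SMulCommClass ℝ Oct Oct where
  smul_comm r x y := by ext <;> simp [smul_sub, smul_add]

theorem oR_mul (r : ℝ) (x : Oct) : oR r * x = r • x := by
  ext <;> simp [fst_oR, Quaternion.mul_coe_eq_smul]

theorem mul_oR (x : Oct) (r : ℝ) : x * oR r = r • x := by
  ext <;> simp [fst_oR, Quaternion.mul_coe_eq_smul]

theorem conj_add (x y : Oct) : conj (x + y) = conj x + conj y := by
  ext <;> simp [add_comm]

theorem conj_sub (x y : Oct) : conj (x - y) = conj x - conj y := by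
  ext <;> simp [sub_eq_add_neg, add_comm]

theorem conj_smul (r : ℝ) (x : Oct) : conj (r • x) = r • conj x := by
  ext <;> simp

theorem conj_mul (x y : Oct) : conj (x * y) = conj y * conj x := by
  ext <;> simp

theorem conj_neg (x : Oct) : conj (-x) = -conj x := by
  ext <;> simp

@[simp] theorem oR_zero : oR 0 = 0 := by
  ext <;> simp [fst_oR]

theorem oR_sub (r s : ℝ) : oR (r - s) = oR r - oR s := by
  ext <;> simp

theorem oinner_comm (x y : Oct) : oinner x y = oinner y x := by
  simp only [oinner, add_comm]

theorem oinner_smul_right (x y : Oct) (r : ℝ) : oinner x (r • y) = r * oinner x y := by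
  simp [oinner, re]
  ring

theorem mul_conj_add_mul_conj (x y : Oct) : x * conj y + y * conj x = oR (2 * oinner x y) := by
  ext <;> simp [oinner, re] <;> ring

theorem conj_mul_add_conj_mul (x y : Oct) : conj x * y + conj y * x = oR (2 * oinner x y) := by
  ext <;> simp [oinner, re] <;> ring

theorem IsIm.re_fst {q : Oct} (hq : IsIm q) : q.fst.re = 0 := by
  simpa [CharZero.eq_neg_self_iff] using congrArg (fun x => x.fst.re) hq

theorem IsIm.mul_add_mul {q : Oct} (hq : IsIm q) (a : Oct) :
    q * a + a * q = (2 * re a) • q - oR (2 * oinner q a) := by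
  ext <;> simp [oinner, re, hq.re_fst] <;> ring

theorem IsIm.anticomm_comm {p q : Oct} (hp : IsIm p) (hq : IsIm q) (a : Oct) :
    p * (q * a + a * q) + (q * a + a * q) * p - (q * (p * a + a * p) + (p * a + a * p) * q) =
      (4 * oinner p a) • q - (4 * oinner q a) • p := by
  rw [hq.mul_add_mul a, hp.mul_add_mul a]
  simp only [mul_sub, sub_mul, mul_smul_comm, smul_mul_assoc, mul_oR, oR_mul]
  module

end Oct

theorem Pm_sub (z w : ℝ) (a b : Oct) : Pm z a - Pm w b = Pm (z - w) (a - b) := by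
  refine Matrix.ext fun i j => ?_
  fin_cases i <;> fin_cases j <;> simp [Pm, oR_sub, conj_sub]
  abel

theorem ad_Dm_Pm {q : Oct} (hq : IsIm q) (z : ℝ) (a : Oct) :
    ad (Dm q) (Pm z a) = Pm 0 (q * a + a * q) := by
  unfold IsIm at hq
  refine Matrix.ext fun i j => ?_
  fin_cases i <;> fin_cases j <;>
    simp [ad, Dm, Pm, oR_mul, mul_oR, conj_add, conj_mul, hq]
  abel

theorem ad_Xm_Pm (q : Oct) (z : ℝ) (a : Oct) :
    ad (Xm q) (Pm z a) = Pm (2 * oinner q a) ((-2 * z) • q) := by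
  refine Matrix.ext fun i j => ?_
  fin_cases i <;> fin_cases j <;> simp [ad, Xm, Pm, oR_mul, mul_oR, conj_neg, conj_smul]
  · exact mul_conj_add_mul_conj q a
  · module
  · module
  · rw [← conj_mul_add_conj_mul]
    abel

theorem bracket_Dp_Dq_general (p q : Oct) (hp : IsIm p) (hq : IsIm q) :
    ∀ (z : ℝ) (a : Oct),
      br (ad (Dm p)) (ad (Dm q)) (Pm z a) = br (ad (Xm p)) (ad (Xm q)) (Pm z a) := by
  intro z a
  simp only [br, ad_Dm_Pm hp, ad_Dm_Pm hq, ad_Xm_Pm, Pm_sub, hp.anticomm_comm hq,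
    oinner_smul_right, oinner_comm q p]
  congr 1
  · ring
  · module

/-- For all imaginary octonions p, q with ⟨p,q⟩ = 0:
[ad_{D_p}, ad_{D_q}] = [ad_{X_p}, ad_{X_q}] as operators on V
(the relation [D_p, D_q] = 2 D_{p,q} = [X_p, X_q]). -/
theorem bracket_Dp_Dq (p q : Oct) (hp : IsIm p) (hq : IsIm q) (hpq : oinner p q = 0) :
    ∀ (z : ℝ) (a : Oct),
      br (ad (Dm p)) (ad (Dm q)) (Pm z a) = br (ad (Xm p)) (ad (Xm q)) (Pm z a) :=
  bracket_Dp_Dq_general p q hp hq
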